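/- arXiv:1512.08613 — 4 statements merged into one kernel-verified Lean document; each statement's English description precedes it below -/
import Mathlib

section
/- Let h : M₁ → M be a tame submersion of manifolds with corners. Then the rank of M₁ (the maximal depth of a point of M₁) is less than or equal to the rank of M. -/
/-- Core data of a (lightweight, axiomatized) manifold with corners: a topological
space together with a family of finite-dimensional real tangent spaces. -/
structure CornerMfldCore where
  carrier : Type
  top : TopologicalSpace carrier
  dim : ℕ
  Tan : carrier → Type
  tanAdd : ∀ x, AddCommGroup (Tan x)
  tanMod : ∀ x, Module ℝ (Tan x)
  tanFin : ∀ x, FiniteDimensional ℝ (Tan x)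

attribute [instance] CornerMfldCore.top CornerMfldCore.tanAdd CornerMfldCore.tanMod
  CornerMfldCore.tanFin

/-- A manifold with corners: at every point `x` we record the closed convex cone
`inward x = T⁺ₓM` of inward pointing tangent vectors and the depth of `x`
(the number `k` of the local model `[0,a)^k × (-a,a)^(n-k)`).  The axiom
`depth_lineality` records that the depth of `x` equals the codimension of the
lineality space `T⁺ₓM ∩ (-T⁺ₓM)` of the inward cone, as in the local model. -/
structure CornerMfld extends CornerMfldCore where
  tan_dim : ∀ x, Module.finrank ℝ (Tan x) = dim
  inward : ∀ x, Set (Tan x)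
  zero_mem_inward : ∀ x, (0 : Tan x) ∈ inward x
  inward_smul : ∀ x (t : ℝ), 0 ≤ t → ∀ v ∈ inward x, t • v ∈ inward x
  inward_add : ∀ x, ∀ v ∈ inward x, ∀ w ∈ inward x, v + w ∈ inward x
  depth : carrier → ℕ
  depth_le_dim : ∀ x, depth x ≤ dim
  depth_lineality : ∀ x, ∃ W : Submodule ℝ (Tan x),
    (W : Set (Tan x)) = {v | v ∈ inward x ∧ -v ∈ inward x} ∧
    depth x + Module.finrank ℝ W = dim

/-- The rank of a manifold with corners: the maximal depth of its points. -/
noncomputable def CornerMfld.rank (M : CornerMfld) : ℕ := sSup (Set.range M.depth)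

/-- A smooth map of manifolds with corners, recorded together with its differential. -/
structure SmoothMapC (M₁ M : CornerMfld) where
  toFun : M₁.carrier → M.carrier
  cont : Continuous toFun
  dmap : ∀ x, M₁.Tan x →ₗ[ℝ] M.Tan (toFun x)
  dmap_inward : ∀ x, ∀ v ∈ M₁.inward x, dmap x v ∈ M.inward (toFun x)

/-- A tame submersion: a smooth map whose differential is everywhere surjective and
pulls the inward pointing cone back exactly to the inward pointing cone:
`(dh_x)⁻¹(T⁺_{h(x)}M) = T⁺ₓM₁`. -/
structure TameSubmersionC (M₁ M : CornerMfld) extends SmoothMapC M₁ M where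
  dmap_surjective : ∀ x, Function.Surjective (dmap x)
  tame : ∀ x, (dmap x) ⁻¹' (M.inward (toFun x)) = M₁.inward x

/-- for a tame submersion `h : M₁ → M` of manifolds with corners, the rank
of `M₁` (the maximal depth of a point of `M₁`) is at most the rank of `M`. -/
theorem rank_le_rank_of_tameSubmersion (M₁ M : CornerMfld) (h : TameSubmersionC M₁ M) :
    M₁.rank ≤ M.rank := by
  have key : ∀ x, M₁.depth x = M.depth (h.toFun x) := by
    intro x
    obtain ⟨W₁, hW₁, hd₁⟩ := M₁.depth_lineality x
    obtain ⟨W, hW, hd⟩ := M.depth_lineality (h.toFun x)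
    set f := h.dmap x with hf
    -- W₁ = W.comap f
    have hcomap : W₁ = W.comap f := by
      ext v
      have h1 : v ∈ W₁ ↔ v ∈ M₁.inward x ∧ -v ∈ M₁.inward x := by
        rw [← SetLike.mem_coe, hW₁]; rfl
      have h2 : f v ∈ W ↔ f v ∈ M.inward (h.toFun x) ∧ -(f v) ∈ M.inward (h.toFun x) := by
        rw [← SetLike.mem_coe, hW]; rfl
      have htame : ∀ w, f w ∈ M.inward (h.toFun x) ↔ w ∈ M₁.inward x := by
        intro w
        constructor
        · intro hw
          have := h.tame x
          rw [← this]; exact hw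
        · intro hw
          have := h.tame x
          rw [← this] at hw; exact hw
      simp only [Submodule.mem_comap, h1, h2, ← map_neg f, htame]
    have hker : LinearMap.ker f ≤ W.comap f := by
      intro v hv
      simp only [Submodule.mem_comap, LinearMap.mem_ker.mp hv]
      exact W.zero_mem
    -- rank-nullity for f
    have hrn : Module.finrank ℝ (LinearMap.range f) + Module.finrank ℝ (LinearMap.ker f)
        = M₁.dim := by
      rw [LinearMap.finrank_range_add_finrank_ker f, M₁.tan_dim]
    have hrange : LinearMap.range f = ⊤ :=
      LinearMap.range_eq_top.mpr (h.dmap_surjective x)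
    have hrn' : M.dim + Module.finrank ℝ (LinearMap.ker f) = M₁.dim := by
      rw [← hrn, hrange, finrank_top, M.tan_dim]
    -- finrank of comap
    have hcom : Module.finrank ℝ (W.comap f)
        = Module.finrank ℝ W + Module.finrank ℝ (LinearMap.ker f) := by
      have := LinearMap.finrank_range_add_finrank_ker (f.domRestrict (W.comap f))
      rw [LinearMap.range_domRestrict, Submodule.map_comap_eq_of_surjective
        (h.dmap_surjective x), LinearMap.ker_domRestrict] at this
      rw [← this, (Submodule.comapSubtypeEquivOfLe hker).finrank_eq]
    rw [hcomap, hcom] at hd₁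
    omega
  have hbdd : BddAbove (Set.range M.depth) := ⟨M.dim, by
    rintro _ ⟨x, rfl⟩; exact M.depth_le_dim x⟩
  refine csSup_le' ?_
  rintro _ ⟨x, rfl⟩
  rw [key x]
  exact le_csSup hbdd ⟨h.toFun x, rfl⟩
end

section
/- Let 𝒢₁ ⇉ M₁ and 𝒢₂ ⇉ M₂ be Lie groupoids, U_i ⊂ M_i open subsets, and φ : (𝒢₁)|_{U₁} → (𝒢₂)|_{U₂} an isomorphism of the reduction groupoids covering a diffeomorphism U₁ → U₂. Assume that φ(U₁ ∩ 𝒢₁-orbit of M₁∖U₁) does not intersect U₂ ∩ (𝒢₂-orbit of M₂∖U₂), and that M := M₁ ∪_φ M₂ is a Hausdorff manifold. Then the quotient ℋ := (𝒢₁ ⊔ 𝒢₂)/∼_φ carries a natural groupoid structure over M: whenever g₁ ∈ 𝒢₁ and g₂ ∈ 𝒢₂ satisfy d(g₁) = r(g₂) in M, both g₁ and g₂ lie (up to the identification φ) in the same 𝒢_i, so composition is well defined; moreover (ℋ)|_{M_i} ≅ 𝒢_i. -/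
/-- A groupoid with objects (units) `Ob` and arrows `Arr`, with domain (source) `d`,
range (target) `r`, a multiplication `mul g h` (meaningful when `d g = r h`), unit
embedding `u`, and inversion `inv`. -/
structure Gpd where
  Ob : Type
  Arr : Type
  d : Arr → Ob
  r : Arr → Ob
  mul : Arr → Arr → Arr
  u : Ob → Arr
  inv : Arr → Arr
  d_u : ∀ x, d (u x) = x
  r_u : ∀ x, r (u x) = x
  d_mul : ∀ g h, d g = r h → d (mul g h) = d h
  r_mul : ∀ g h, d g = r h → r (mul g h) = r g
  mul_assoc : ∀ g h k, d g = r h → d h = r k → mul (mul g h) k = mul g (mul h k)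
  mul_unit : ∀ g, mul g (u (d g)) = g
  unit_mul : ∀ g, mul (u (r g)) g = g
  d_inv : ∀ g, d (inv g) = r g
  r_inv : ∀ g, r (inv g) = d g
  mul_inv : ∀ g, mul g (inv g) = u (r g)
  inv_mul : ∀ g, mul (inv g) g = u (d g)

/-- The set of arrows of the reduction `𝒢|_A = d⁻¹(A) ∩ r⁻¹(A)`. -/
def Gpd.redArr (G : Gpd) (A : Set G.Ob) : Set G.Arr := {g | G.d g ∈ A ∧ G.r g ∈ A}

/-- The `𝒢`-orbit (saturation) `𝒢 B 𝒢` of a set of units `B`. -/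
def Gpd.orbit (G : Gpd) (B : Set G.Ob) : Set G.Ob :=
  {x | ∃ g, G.d g ∈ B ∧ G.r g = x}

/-- The gluing relation on `M₁ ⊔ M₂` generated by `x ∼ φb x` for `x ∈ U₁`. -/
def glueRel {Ob₁ Ob₂ : Type} (U₁ : Set Ob₁) (φb : Ob₁ → Ob₂) :
    (Ob₁ ⊕ Ob₂) → (Ob₁ ⊕ Ob₂) → Prop := fun a b =>
  ∃ x ∈ U₁, (a = Sum.inl x ∧ b = Sum.inr (φb x)) ∨ (a = Sum.inr (φb x) ∧ b = Sum.inl x)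

/-- The glued space of units `M₁ ∪_φ M₂`. -/
def glueOb {Ob₁ Ob₂ : Type} (U₁ : Set Ob₁) (φb : Ob₁ → Ob₂) : Type :=
  Quot (glueRel U₁ φb)

instance {Ob₁ Ob₂ : Type} [TopologicalSpace Ob₁] [TopologicalSpace Ob₂]
    (U₁ : Set Ob₁) (φb : Ob₁ → Ob₂) : TopologicalSpace (glueOb U₁ φb) :=
  inferInstanceAs (TopologicalSpace (Quot _))

/-!
Arrows of the glued groupoid are represented canonically, as an arrow of `𝒢₁` or an arrow
of `𝒢₂` outside the reduction `𝒢₂|_{U₂}`, which `φ` identifies with `𝒢₁|_{U₁}`.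
The saturation condition says exactly that an arrow `g` of `𝒢₁` and an arrow `p` of `𝒢₂`
that are composable in `M` cannot both leave the glued region: if `g` starts in `U₁` and
ends outside it while `p` ends at `φ (d g)` and starts outside `U₂`, then `φ (d g)` lies
in `φ (U₁ ∩ 𝒢₁ U₁ᶜ) ∩ U₂ ∩ 𝒢₂ U₂ᶜ`. Hence every composable pair, and then every composable
triple, comes from a single `𝒢ᵢ`, and the groupoid axioms of `ℋ` are inherited from there.
-/

namespace glueOb

variable {Ob₁ Ob₂ : Type} {U₁ : Set Ob₁} {φb : Ob₁ → Ob₂}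

def inl (x : Ob₁) : glueOb U₁ φb := Quot.mk _ (.inl x)

def inr (y : Ob₂) : glueOb U₁ φb := Quot.mk _ (.inr y)

@[elab_as_elim]
theorem ind {motive : glueOb U₁ φb → Prop} (hinl : ∀ x, motive (inl x))
    (hinr : ∀ y, motive (inr y)) (q : glueOb U₁ φb) : motive q :=
  Quot.ind (Sum.rec hinl hinr) q

/-- Every point of `M₁ ∪_φ M₂` has a unique representative in `(M₁ ∖ U₁) ⊔ M₂`. -/
noncomputable def normalForm : glueOb U₁ φb → Ob₁ ⊕ Ob₂ :=
  open Classical in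
  Quot.lift (Sum.elim (fun x => if x ∈ U₁ then .inr (φb x) else .inl x) .inr) (by
    rintro _ _ ⟨x, hx, ⟨rfl, rfl⟩ | ⟨rfl, rfl⟩⟩ <;> simp [hx])

open Classical in
theorem normalForm_inl (x : Ob₁) :
    (inl x : glueOb U₁ φb).normalForm = if x ∈ U₁ then .inr (φb x) else .inl x :=
  rfl

theorem normalForm_inr (y : Ob₂) : (inr y : glueOb U₁ φb).normalForm = .inr y :=
  rfl

theorem inl_eq_inr_iff {x : Ob₁} {y : Ob₂} :
    (inl x : glueOb U₁ φb) = inr y ↔ x ∈ U₁ ∧ φb x = y := by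
  constructor
  · intro h
    have h' := congrArg normalForm h
    rw [normalForm_inl, normalForm_inr] at h'
    split_ifs at h' with hx
    exact ⟨hx, Sum.inr.inj h'⟩
  · rintro ⟨hx, rfl⟩
    exact Quot.sound ⟨x, hx, .inl ⟨rfl, rfl⟩⟩

theorem inr_injective : Function.Injective (inr : Ob₂ → glueOb U₁ φb) :=
  fun _ _ h => Sum.inr.inj (congrArg normalForm h)

theorem inl_injective (hφb : Set.InjOn φb U₁) : Function.Injective (inl : Ob₁ → glueOb U₁ φb) := by
  intro x y h
  have h' := congrArg normalForm h
  rw [normalForm_inl, normalForm_inl] at h'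
  split_ifs at h' with hx hy hy
  · exact hφb hx hy (Sum.inr.inj h')
  · exact Sum.inl.inj h'

end glueOb

namespace Gpd

variable (G : Gpd)

theorem u_mul_u (x : G.Ob) : G.mul (G.u x) (G.u x) = G.u x := by
  simpa only [G.d_u] using G.mul_unit (G.u x)

theorem eq_u_of_mul_self {a : G.Arr} (hdr : G.d a = G.r a) (h : G.mul a a = a) :
    a = G.u (G.r a) :=
  calc a = G.mul a (G.u (G.d a)) := (G.mul_unit a).symm
    _ = G.mul a (G.mul a (G.inv a)) := by rw [hdr, G.mul_inv]
    _ = G.mul (G.mul a a) (G.inv a) := (G.mul_assoc _ _ _ hdr (G.r_inv a).symm).symm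
    _ = G.u (G.r a) := by rw [h, G.mul_inv]

theorem eq_inv_of_mul_eq_u {a b : G.Arr} (hd : G.d a = G.r b) (h : G.mul a b = G.u (G.r a)) :
    b = G.inv a :=
  calc b = G.mul (G.mul (G.inv a) a) b := by rw [G.inv_mul, hd, G.unit_mul]
    _ = G.mul (G.inv a) (G.mul a b) := G.mul_assoc _ _ _ (G.d_inv a) hd
    _ = G.inv a := by rw [h, ← G.d_inv, G.mul_unit]

variable {G} {A B : Set G.Ob} {g k : G.Arr}

theorem r_mem_orbit (h : G.d g ∈ B) : G.r g ∈ G.orbit B := ⟨g, h, rfl⟩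

theorem d_mem_orbit (h : G.r g ∈ B) : G.d g ∈ G.orbit B := by
  simpa only [G.r_inv] using G.r_mem_orbit (g := G.inv g) (by rwa [G.d_inv])

theorem u_mem_redArr {x : G.Ob} (hx : x ∈ A) : G.u x ∈ G.redArr A :=
  ⟨(G.d_u x).symm ▸ hx, (G.r_u x).symm ▸ hx⟩

theorem inv_mem_redArr_iff : G.inv g ∈ G.redArr A ↔ g ∈ G.redArr A := by
  simp only [redArr, Set.mem_ofPred_eq, G.d_inv, G.r_inv, and_comm]

theorem mul_mem_redArr (hc : G.d g = G.r k) (hg : g ∈ G.redArr A) (hk : k ∈ G.redArr A) :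
    G.mul g k ∈ G.redArr A :=
  ⟨(G.d_mul _ _ hc).symm ▸ hk.1, (G.r_mul _ _ hc).symm ▸ hg.2⟩

theorem mem_redArr_of_mul_left (hc : G.d g = G.r k) (hgk : G.mul g k ∈ G.redArr A)
    (hk : k ∈ G.redArr A) : g ∈ G.redArr A :=
  ⟨hc ▸ hk.2, G.r_mul _ _ hc ▸ hgk.2⟩

theorem mem_redArr_of_mul_right (hc : G.d g = G.r k) (hgk : G.mul g k ∈ G.redArr A)
    (hg : g ∈ G.redArr A) : k ∈ G.redArr A :=
  ⟨G.d_mul _ _ hc ▸ hgk.1, hc ▸ hg.1⟩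

/-- An isomorphism `φ` of reductions `𝒢₁|_{U₁} ≅ 𝒢₂|_{U₂}` covering a bijection `φb : U₁ ≅ U₂`. -/
structure GlueData (G₁ G₂ : Gpd) where
  U₁ : Set G₁.Ob
  U₂ : Set G₂.Ob
  φb : G₁.Ob → G₂.Ob
  φ : G₁.Arr → G₂.Arr
  bijOn_φb : Set.BijOn φb U₁ U₂
  bijOn_φ : Set.BijOn φ (G₁.redArr U₁) (G₂.redArr U₂)
  d_φ : ∀ g ∈ G₁.redArr U₁, G₂.d (φ g) = φb (G₁.d g)
  r_φ : ∀ g ∈ G₁.redArr U₁, G₂.r (φ g) = φb (G₁.r g)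
  φ_mul : ∀ g h, g ∈ G₁.redArr U₁ → h ∈ G₁.redArr U₁ → G₁.d g = G₁.r h →
    φ (G₁.mul g h) = G₂.mul (φ g) (φ h)

namespace GlueData

variable {G₁ G₂ : Gpd} (D : G₁.GlueData G₂)

def Saturated : Prop :=
  D.φb '' (D.U₁ ∩ G₁.orbit D.U₁ᶜ) ∩ (D.U₂ ∩ G₂.orbit D.U₂ᶜ) = ∅

abbrev Ob : Type := glueOb D.U₁ D.φb

abbrev Arr : Type := G₁.Arr ⊕ {p : G₂.Arr // p ∉ G₂.redArr D.U₂}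

def j₁ : G₁.Arr → D.Arr := .inl

open Classical in
noncomputable def j₂ (p : G₂.Arr) : D.Arr :=
  if hp : p ∈ G₂.redArr D.U₂ then .inl (D.bijOn_φ.surjOn hp).choose else .inr ⟨p, hp⟩

/-- A left inverse of `j₂`; on `j₁ g` it is junk unless `g ∈ 𝒢₁|_{U₁}`. -/
def toG₂ : D.Arr → G₂.Arr
  | .inl g => D.φ g
  | .inr p => p.1

def d : D.Arr → D.Ob
  | .inl g => glueOb.inl (G₁.d g)
  | .inr p => glueOb.inr (G₂.d p.1)

def r : D.Arr → D.Ob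
  | .inl g => glueOb.inl (G₁.r g)
  | .inr p => glueOb.inr (G₂.r p.1)

noncomputable def mul : D.Arr → D.Arr → D.Arr
  | .inl g, .inl k => D.j₁ (G₁.mul g k)
  | a, b => D.j₂ (G₂.mul (D.toG₂ a) (D.toG₂ b))

noncomputable def inv : D.Arr → D.Arr
  | .inl g => D.j₁ (G₁.inv g)
  | .inr p => D.j₂ (G₂.inv p.1)

noncomputable def u (q : D.Ob) : D.Arr :=
  q.normalForm.elim (fun x => D.j₁ (G₁.u x)) (fun y => D.j₂ (G₂.u y))

theorem φ_u {x : G₁.Ob} (hx : x ∈ D.U₁) : D.φ (G₁.u x) = G₂.u (D.φb x) := by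
  have hu := G₁.u_mem_redArr hx
  have hd : G₂.d (D.φ (G₁.u x)) = D.φb x := by rw [D.d_φ _ hu, G₁.d_u]
  have hr : G₂.r (D.φ (G₁.u x)) = D.φb x := by rw [D.r_φ _ hu, G₁.r_u]
  rw [← hr]
  refine G₂.eq_u_of_mul_self (hd.trans hr.symm) ?_
  rw [← D.φ_mul _ _ hu hu (by rw [G₁.d_u, G₁.r_u]), G₁.u_mul_u]

theorem φ_inv {g : G₁.Arr} (hg : g ∈ G₁.redArr D.U₁) : D.φ (G₁.inv g) = G₂.inv (D.φ g) := by
  have hg' := G₁.inv_mem_redArr_iff.2 hg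
  refine G₂.eq_inv_of_mul_eq_u ?_ ?_
  · rw [D.d_φ _ hg, D.r_φ _ hg', G₁.r_inv]
  · rw [← D.φ_mul _ _ hg hg' (G₁.r_inv g).symm, G₁.mul_inv, D.φ_u hg.2, D.r_φ _ hg]

theorem d_φ_eq_r_φ_iff {g k : G₁.Arr} (hg : g ∈ G₁.redArr D.U₁) (hk : k ∈ G₁.redArr D.U₁) :
    G₂.d (D.φ g) = G₂.r (D.φ k) ↔ G₁.d g = G₁.r k := by
  rw [D.d_φ g hg, D.r_φ k hk]
  exact D.bijOn_φb.injOn.eq_iff hg.1 hk.2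

theorem j₂_φ {g : G₁.Arr} (hg : g ∈ G₁.redArr D.U₁) : D.j₂ (D.φ g) = D.j₁ g := by
  have hp := D.bijOn_φ.mapsTo hg
  have hspec := (D.bijOn_φ.surjOn hp).choose_spec
  rw [j₂, dif_pos hp, j₁]
  exact congrArg Sum.inl (D.bijOn_φ.injOn hspec.1 hg hspec.2)

theorem j₂_of_notMem {p : G₂.Arr} (hp : p ∉ G₂.redArr D.U₂) : D.j₂ p = .inr ⟨p, hp⟩ := by
  rw [j₂, dif_neg hp]

theorem toG₂_j₂ (p : G₂.Arr) : D.toG₂ (D.j₂ p) = p := by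
  by_cases hp : p ∈ G₂.redArr D.U₂
  · obtain ⟨g, hg, rfl⟩ := D.bijOn_φ.surjOn hp
    rw [D.j₂_φ hg]
    rfl
  · rw [D.j₂_of_notMem hp]
    rfl

theorem j₁_injective : Function.Injective D.j₁ := Sum.inl_injective

theorem j₂_injective : Function.Injective D.j₂ := Function.LeftInverse.injective D.toG₂_j₂

theorem j₁_eq_j₂_iff {g : G₁.Arr} {p : G₂.Arr} :
    D.j₁ g = D.j₂ p ↔ g ∈ G₁.redArr D.U₁ ∧ p = D.φ g := by
  refine ⟨fun h => ?_, fun ⟨hg, hp⟩ => hp ▸ (D.j₂_φ hg).symm⟩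
  have hp : p ∈ G₂.redArr D.U₂ := by
    by_contra hp
    rw [D.j₂_of_notMem hp] at h
    exact Sum.inl_ne_inr h
  obtain ⟨g', hg', rfl⟩ := D.bijOn_φ.surjOn hp
  obtain rfl := D.j₁_injective (h.trans (D.j₂_φ hg'))
  exact ⟨hg', rfl⟩

theorem exists_eq_j₁_or_j₂ (a : D.Arr) : (∃ g, a = D.j₁ g) ∨ ∃ p, a = D.j₂ p := by
  rcases a with g | ⟨p, hp⟩
  · exact .inl ⟨g, rfl⟩
  · exact .inr ⟨p, (D.j₂_of_notMem hp).symm⟩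

theorem d_j₁ (g : G₁.Arr) : D.d (D.j₁ g) = glueOb.inl (G₁.d g) := rfl

theorem r_j₁ (g : G₁.Arr) : D.r (D.j₁ g) = glueOb.inl (G₁.r g) := rfl

theorem j₁_mul (g k : G₁.Arr) : D.j₁ (G₁.mul g k) = D.mul (D.j₁ g) (D.j₁ k) := rfl

theorem inv_j₁ (g : G₁.Arr) : D.inv (D.j₁ g) = D.j₁ (G₁.inv g) := rfl

theorem u_inr (y : G₂.Ob) : D.u (glueOb.inr y) = D.j₂ (G₂.u y) := rfl

theorem d_j₂ (p : G₂.Arr) : D.d (D.j₂ p) = glueOb.inr (G₂.d p) := by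
  by_cases hp : p ∈ G₂.redArr D.U₂
  · obtain ⟨g, hg, rfl⟩ := D.bijOn_φ.surjOn hp
    rw [D.j₂_φ hg, D.d_φ g hg]
    exact glueOb.inl_eq_inr_iff.2 ⟨hg.1, rfl⟩
  · rw [D.j₂_of_notMem hp]
    rfl

theorem r_j₂ (p : G₂.Arr) : D.r (D.j₂ p) = glueOb.inr (G₂.r p) := by
  by_cases hp : p ∈ G₂.redArr D.U₂
  · obtain ⟨g, hg, rfl⟩ := D.bijOn_φ.surjOn hp
    rw [D.j₂_φ hg, D.r_φ g hg]
    exact glueOb.inl_eq_inr_iff.2 ⟨hg.2, rfl⟩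
  · rw [D.j₂_of_notMem hp]
    rfl

theorem j₂_mul {p q : G₂.Arr} (h : G₂.d p = G₂.r q) :
    D.j₂ (G₂.mul p q) = D.mul (D.j₂ p) (D.j₂ q) := by
  by_cases hpq : p ∈ G₂.redArr D.U₂ ∧ q ∈ G₂.redArr D.U₂
  · obtain ⟨⟨g, hg, rfl⟩, ⟨k, hk, rfl⟩⟩ := And.imp (D.bijOn_φ.surjOn ·) (D.bijOn_φ.surjOn ·) hpq
    have hgk := (D.d_φ_eq_r_φ_iff hg hk).1 h
    rw [← D.φ_mul _ _ hg hk hgk, D.j₂_φ (G₁.mul_mem_redArr hgk hg hk), D.j₂_φ hg, D.j₂_φ hk]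
    rfl
  · conv_lhs => rw [← D.toG₂_j₂ p, ← D.toG₂_j₂ q]
    rcases not_and_or.1 hpq with hp | hq
    · rw [D.j₂_of_notMem hp]
      rcases D.j₂ q <;> rfl
    · rw [D.j₂_of_notMem hq]
      rcases D.j₂ p <;> rfl

theorem inv_j₂ (p : G₂.Arr) : D.inv (D.j₂ p) = D.j₂ (G₂.inv p) := by
  by_cases hp : p ∈ G₂.redArr D.U₂
  · obtain ⟨g, hg, rfl⟩ := D.bijOn_φ.surjOn hp
    rw [D.j₂_φ hg, ← D.φ_inv hg, D.j₂_φ (G₁.inv_mem_redArr_iff.2 hg)]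
    rfl
  · rw [D.j₂_of_notMem hp]
    rfl

theorem u_inl (x : G₁.Ob) : D.u (glueOb.inl x) = D.j₁ (G₁.u x) := by
  rw [u, glueOb.normalForm_inl]
  split_ifs with hx
  · rw [Sum.elim_inr, ← D.φ_u hx, D.j₂_φ (G₁.u_mem_redArr hx)]
  · rfl

theorem exists_eq_j₁_of_d_r {a : D.Arr} (hd : ∃ x, D.d a = glueOb.inl x)
    (hr : ∃ y, D.r a = glueOb.inl y) : ∃ g, a = D.j₁ g := by
  rcases a with g | ⟨p, hp⟩
  · exact ⟨g, rfl⟩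
  · obtain ⟨x, hx⟩ := hd
    obtain ⟨y, hy⟩ := hr
    obtain ⟨hxU, hxp⟩ := glueOb.inl_eq_inr_iff.1 hx.symm
    obtain ⟨hyU, hyp⟩ := glueOb.inl_eq_inr_iff.1 hy.symm
    exact (hp ⟨hxp ▸ D.bijOn_φb.mapsTo hxU, hyp ▸ D.bijOn_φb.mapsTo hyU⟩).elim

theorem exists_eq_j₂_of_d_r {a : D.Arr} (hd : ∃ x, D.d a = glueOb.inr x)
    (hr : ∃ y, D.r a = glueOb.inr y) : ∃ p, a = D.j₂ p := by
  rcases a with g | ⟨p, hp⟩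
  · obtain ⟨x, hx⟩ := hd
    obtain ⟨y, hy⟩ := hr
    have hg : g ∈ G₁.redArr D.U₁ := ⟨(glueOb.inl_eq_inr_iff.1 hx).1, (glueOb.inl_eq_inr_iff.1 hy).1⟩
    exact ⟨D.φ g, (D.j₂_φ hg).symm⟩
  · exact ⟨p, (D.j₂_of_notMem hp).symm⟩

variable {D}

theorem Saturated.mem_redArr_or_of_r_eq (hsat : D.Saturated) {g : G₁.Arr} {p : G₂.Arr}
    (hg : G₁.d g ∈ D.U₁) (h : G₂.r p = D.φb (G₁.d g)) :
    g ∈ G₁.redArr D.U₁ ∨ p ∈ G₂.redArr D.U₂ := by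
  by_contra hnot
  obtain ⟨hg', hp'⟩ := not_or.1 hnot
  have hrp : G₂.r p ∈ D.U₂ := h ▸ D.bijOn_φb.mapsTo hg
  have hrg : G₁.r g ∉ D.U₁ := fun hr => hg' ⟨hg, hr⟩
  have hdp : G₂.d p ∉ D.U₂ := fun hd => hp' ⟨hd, hrp⟩
  exact Set.eq_empty_iff_forall_notMem.1 hsat (G₂.r p)
    ⟨⟨G₁.d g, ⟨hg, G₁.d_mem_orbit hrg⟩, h.symm⟩, hrp, G₂.r_mem_orbit hdp⟩

theorem Saturated.mem_redArr_or_of_d_eq (hsat : D.Saturated) {g : G₁.Arr} {p : G₂.Arr}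
    (hg : G₁.r g ∈ D.U₁) (h : G₂.d p = D.φb (G₁.r g)) :
    g ∈ G₁.redArr D.U₁ ∨ p ∈ G₂.redArr D.U₂ := by
  simpa only [G₁.inv_mem_redArr_iff, G₂.inv_mem_redArr_iff] using
    hsat.mem_redArr_or_of_r_eq (g := G₁.inv g) (p := G₂.inv p)
      (by rwa [G₁.d_inv]) (by rw [G₂.r_inv, G₁.d_inv, h])

theorem Saturated.composable_cases (hsat : D.Saturated) {a b : D.Arr} (h : D.d a = D.r b) :
    (∃ g k, a = D.j₁ g ∧ b = D.j₁ k ∧ G₁.d g = G₁.r k) ∨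
      ∃ p q, a = D.j₂ p ∧ b = D.j₂ q ∧ G₂.d p = G₂.r q := by
  rcases a with g | ⟨p, hp⟩ <;> rcases b with k | ⟨q, hq⟩
  · exact .inl ⟨g, k, rfl, rfl, glueOb.inl_injective D.bijOn_φb.injOn h⟩
  · obtain ⟨hdg, hrq⟩ := glueOb.inl_eq_inr_iff.1 h
    have hg := (hsat.mem_redArr_or_of_r_eq hdg hrq.symm).resolve_right hq
    exact .inr ⟨D.φ g, q, (D.j₂_φ hg).symm, (D.j₂_of_notMem hq).symm, by rw [D.d_φ g hg, hrq]⟩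
  · obtain ⟨hrk, hdp⟩ := glueOb.inl_eq_inr_iff.1 h.symm
    have hk := (hsat.mem_redArr_or_of_d_eq hrk hdp.symm).resolve_right hp
    exact .inr ⟨p, D.φ k, (D.j₂_of_notMem hp).symm, (D.j₂_φ hk).symm, by rw [D.r_φ k hk, hdp]⟩
  · exact .inr ⟨p, q, (D.j₂_of_notMem hp).symm, (D.j₂_of_notMem hq).symm,
      glueOb.inr_injective h⟩

theorem Saturated.composable₃_cases (hsat : D.Saturated) {a b c : D.Arr}
    (hab : D.d a = D.r b) (hbc : D.d b = D.r c) :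
    (∃ g k m, a = D.j₁ g ∧ b = D.j₁ k ∧ c = D.j₁ m ∧ G₁.d g = G₁.r k ∧ G₁.d k = G₁.r m) ∨
      ∃ p q s, a = D.j₂ p ∧ b = D.j₂ q ∧ c = D.j₂ s ∧ G₂.d p = G₂.r q ∧ G₂.d q = G₂.r s := by
  rcases hsat.composable_cases hab with ⟨g, k, rfl, rfl, hgk⟩ | ⟨p, q, rfl, rfl, hpq⟩ <;>
    rcases hsat.composable_cases hbc with ⟨k', m, hk', rfl, hkm⟩ | ⟨q', s, hq', rfl, hqs⟩
  · obtain rfl := D.j₁_injective hk'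
    exact .inl ⟨g, k, m, rfl, rfl, rfl, hgk, hkm⟩
  · obtain ⟨hk, rfl⟩ := D.j₁_eq_j₂_iff.1 hq'
    have hdgk : G₁.d (G₁.mul g k) ∈ D.U₁ := by rw [G₁.d_mul _ _ hgk]; exact hk.1
    rcases hsat.mem_redArr_or_of_r_eq hdgk (by rw [← hqs, D.d_φ _ hk, G₁.d_mul _ _ hgk])
      with hgk' | hs
    · have hg := G₁.mem_redArr_of_mul_left hgk hgk' hk
      exact .inr ⟨D.φ g, D.φ k, s, (D.j₂_φ hg).symm, (D.j₂_φ hk).symm, rfl,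
        (D.d_φ_eq_r_φ_iff hg hk).2 hgk, hqs⟩
    · obtain ⟨m, hm, rfl⟩ := D.bijOn_φ.surjOn hs
      exact .inl ⟨g, k, m, rfl, rfl, D.j₂_φ hm, hgk, (D.d_φ_eq_r_φ_iff hk hm).1 hqs⟩
  · obtain ⟨hk, rfl⟩ := D.j₁_eq_j₂_iff.1 hk'.symm
    have hrkm : G₁.r (G₁.mul k' m) ∈ D.U₁ := by rw [G₁.r_mul _ _ hkm]; exact hk.2
    rcases hsat.mem_redArr_or_of_d_eq hrkm (by rw [hpq, D.r_φ _ hk, G₁.r_mul _ _ hkm])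
      with hkm' | hp
    · have hm := G₁.mem_redArr_of_mul_right hkm hkm' hk
      exact .inr ⟨p, D.φ k', D.φ m, rfl, rfl, (D.j₂_φ hm).symm, hpq,
        (D.d_φ_eq_r_φ_iff hk hm).2 hkm⟩
    · obtain ⟨g, hg, rfl⟩ := D.bijOn_φ.surjOn hp
      exact .inl ⟨g, k', m, D.j₂_φ hg, D.j₂_φ hk, rfl, (D.d_φ_eq_r_φ_iff hg hk).1 hpq, hkm⟩
  · obtain rfl := D.j₂_injective hq'
    exact .inr ⟨p, q, s, rfl, rfl, rfl, hpq, hqs⟩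

theorem Saturated.d_mul (hsat : D.Saturated) {a b : D.Arr} (h : D.d a = D.r b) :
    D.d (D.mul a b) = D.d b := by
  rcases hsat.composable_cases h with ⟨g, k, rfl, rfl, hgk⟩ | ⟨p, q, rfl, rfl, hpq⟩
  · rw [← D.j₁_mul, D.d_j₁, D.d_j₁, G₁.d_mul _ _ hgk]
  · rw [← D.j₂_mul hpq, D.d_j₂, D.d_j₂, G₂.d_mul _ _ hpq]

theorem Saturated.r_mul (hsat : D.Saturated) {a b : D.Arr} (h : D.d a = D.r b) :
    D.r (D.mul a b) = D.r a := by
  rcases hsat.composable_cases h with ⟨g, k, rfl, rfl, hgk⟩ | ⟨p, q, rfl, rfl, hpq⟩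
  · rw [← D.j₁_mul, D.r_j₁, D.r_j₁, G₁.r_mul _ _ hgk]
  · rw [← D.j₂_mul hpq, D.r_j₂, D.r_j₂, G₂.r_mul _ _ hpq]

theorem Saturated.mul_assoc (hsat : D.Saturated) {a b c : D.Arr} (hab : D.d a = D.r b)
    (hbc : D.d b = D.r c) : D.mul (D.mul a b) c = D.mul a (D.mul b c) := by
  rcases hsat.composable₃_cases hab hbc with
    ⟨g, k, m, rfl, rfl, rfl, hgk, hkm⟩ | ⟨p, q, s, rfl, rfl, rfl, hpq, hqs⟩
  · simp only [← D.j₁_mul, G₁.mul_assoc _ _ _ hgk hkm]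
  · rw [← D.j₂_mul hpq, ← D.j₂_mul hqs, ← D.j₂_mul (by rwa [G₂.d_mul _ _ hpq]),
      ← D.j₂_mul (by rwa [G₂.r_mul _ _ hqs]), G₂.mul_assoc _ _ _ hpq hqs]

variable (D)

theorem d_u (q : D.Ob) : D.d (D.u q) = q := by
  induction q using glueOb.ind with
  | hinl x => rw [D.u_inl, D.d_j₁, G₁.d_u]
  | hinr y => rw [D.u_inr, D.d_j₂, G₂.d_u]

theorem r_u (q : D.Ob) : D.r (D.u q) = q := by
  induction q using glueOb.ind with
  | hinl x => rw [D.u_inl, D.r_j₁, G₁.r_u]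
  | hinr y => rw [D.u_inr, D.r_j₂, G₂.r_u]

theorem mul_unit (a : D.Arr) : D.mul a (D.u (D.d a)) = a := by
  rcases D.exists_eq_j₁_or_j₂ a with ⟨g, rfl⟩ | ⟨p, rfl⟩
  · rw [D.d_j₁, D.u_inl, ← D.j₁_mul, G₁.mul_unit]
  · rw [D.d_j₂, D.u_inr, ← D.j₂_mul (G₂.r_u _).symm, G₂.mul_unit]

theorem unit_mul (a : D.Arr) : D.mul (D.u (D.r a)) a = a := by
  rcases D.exists_eq_j₁_or_j₂ a with ⟨g, rfl⟩ | ⟨p, rfl⟩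
  · rw [D.r_j₁, D.u_inl, ← D.j₁_mul, G₁.unit_mul]
  · rw [D.r_j₂, D.u_inr, ← D.j₂_mul (G₂.d_u _), G₂.unit_mul]

theorem d_inv (a : D.Arr) : D.d (D.inv a) = D.r a := by
  rcases D.exists_eq_j₁_or_j₂ a with ⟨g, rfl⟩ | ⟨p, rfl⟩
  · rw [D.inv_j₁, D.d_j₁, D.r_j₁, G₁.d_inv]
  · rw [D.inv_j₂, D.d_j₂, D.r_j₂, G₂.d_inv]

theorem r_inv (a : D.Arr) : D.r (D.inv a) = D.d a := by
  rcases D.exists_eq_j₁_or_j₂ a with ⟨g, rfl⟩ | ⟨p, rfl⟩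
  · rw [D.inv_j₁, D.r_j₁, D.d_j₁, G₁.r_inv]
  · rw [D.inv_j₂, D.r_j₂, D.d_j₂, G₂.r_inv]

theorem mul_inv (a : D.Arr) : D.mul a (D.inv a) = D.u (D.r a) := by
  rcases D.exists_eq_j₁_or_j₂ a with ⟨g, rfl⟩ | ⟨p, rfl⟩
  · rw [D.inv_j₁, ← D.j₁_mul, G₁.mul_inv, D.r_j₁, D.u_inl]
  · rw [D.inv_j₂, ← D.j₂_mul (G₂.r_inv p).symm, G₂.mul_inv, D.r_j₂, D.u_inr]

theorem inv_mul (a : D.Arr) : D.mul (D.inv a) a = D.u (D.d a) := by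
  rcases D.exists_eq_j₁_or_j₂ a with ⟨g, rfl⟩ | ⟨p, rfl⟩
  · rw [D.inv_j₁, ← D.j₁_mul, G₁.inv_mul, D.d_j₁, D.u_inl]
  · rw [D.inv_j₂, ← D.j₂_mul (G₂.d_inv p), G₂.inv_mul, D.d_j₂, D.u_inr]

noncomputable def glue (hsat : D.Saturated) : Gpd where
  Ob := D.Ob
  Arr := D.Arr
  d := D.d
  r := D.r
  mul := D.mul
  u := D.u
  inv := D.inv
  d_u := D.d_u
  r_u := D.r_u
  d_mul _ _ := hsat.d_mul
  r_mul _ _ := hsat.r_mul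
  mul_assoc _ _ _ := hsat.mul_assoc
  mul_unit := D.mul_unit
  unit_mul := D.unit_mul
  d_inv := D.d_inv
  r_inv := D.r_inv
  mul_inv := D.mul_inv
  inv_mul := D.inv_mul

end GlueData

end Gpd

theorem glue_groupoids_general (G₁ G₂ : Gpd)
    (U₁ : Set G₁.Ob) (U₂ : Set G₂.Ob)
    (φb : G₁.Ob → G₂.Ob) (φ : G₁.Arr → G₂.Arr)
    -- `φ` is an isomorphism of the reductions covering the homeomorphism `φb : U₁ → U₂`
    (hφb : Set.BijOn φb U₁ U₂)
    (hφ : Set.BijOn φ (G₁.redArr U₁) (G₂.redArr U₂))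
    (hφd : ∀ g ∈ G₁.redArr U₁, G₂.d (φ g) = φb (G₁.d g))
    (hφr : ∀ g ∈ G₁.redArr U₁, G₂.r (φ g) = φb (G₁.r g))
    (hφmul : ∀ g h, g ∈ G₁.redArr U₁ → h ∈ G₁.redArr U₁ → G₁.d g = G₁.r h →
      φ (G₁.mul g h) = G₂.mul (φ g) (φ h))
    -- the saturation condition
    (hdisj : φb '' (U₁ ∩ G₁.orbit U₁ᶜ) ∩ (U₂ ∩ G₂.orbit U₂ᶜ) = ∅) :
    ∃ H : Gpd, ∃ eOb : H.Ob ≃ glueOb U₁ φb,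
      ∃ (j₁ : G₁.Arr → H.Arr) (j₂ : G₂.Arr → H.Arr),
      -- `j₁`, `j₂` are groupoid morphisms covering the canonical maps `M₁, M₂ → M`
      (∀ g, eOb (H.d (j₁ g)) = Quot.mk _ (Sum.inl (G₁.d g))) ∧
      (∀ g, eOb (H.r (j₁ g)) = Quot.mk _ (Sum.inl (G₁.r g))) ∧
      (∀ g, eOb (H.d (j₂ g)) = Quot.mk _ (Sum.inr (G₂.d g))) ∧
      (∀ g, eOb (H.r (j₂ g)) = Quot.mk _ (Sum.inr (G₂.r g))) ∧
      (∀ g h, G₁.d g = G₁.r h → j₁ (G₁.mul g h) = H.mul (j₁ g) (j₁ h)) ∧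
      (∀ g h, G₂.d g = G₂.r h → j₂ (G₂.mul g h) = H.mul (j₂ g) (j₂ h)) ∧
      (∀ x, H.u (eOb.symm (Quot.mk _ (Sum.inl x))) = j₁ (G₁.u x)) ∧
      (∀ x, H.u (eOb.symm (Quot.mk _ (Sum.inr x))) = j₂ (G₂.u x)) ∧
      -- the two images are glued exactly along `φ`
      (∀ g ∈ G₁.redArr U₁, j₂ (φ g) = j₁ g) ∧
      (∀ g₁ g₂, j₁ g₁ = j₂ g₂ → g₁ ∈ G₁.redArr U₁ ∧ g₂ = φ g₁) ∧
      Function.Injective j₁ ∧ Function.Injective j₂ ∧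
      (∀ a : H.Arr, (∃ g, a = j₁ g) ∨ (∃ g, a = j₂ g)) ∧
      -- the reductions of `H` to `M₁` and to `M₂` are `𝒢₁` and `𝒢₂`
      (∀ a : H.Arr, (∃ x, eOb (H.d a) = Quot.mk _ (Sum.inl x)) →
        (∃ y, eOb (H.r a) = Quot.mk _ (Sum.inl y)) → ∃ g, a = j₁ g) ∧
      (∀ a : H.Arr, (∃ x, eOb (H.d a) = Quot.mk _ (Sum.inr x)) →
        (∃ y, eOb (H.r a) = Quot.mk _ (Sum.inr y)) → ∃ g, a = j₂ g) := by
  let D : G₁.GlueData G₂ := ⟨U₁, U₂, φb, φ, hφb, hφ, hφd, hφr, hφmul⟩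
  exact ⟨D.glue hdisj, Equiv.refl _, D.j₁, D.j₂, D.d_j₁, D.r_j₁, D.d_j₂, D.r_j₂,
    fun g k _ => D.j₁_mul g k, fun _ _ => D.j₂_mul, D.u_inl, D.u_inr, fun _ => D.j₂_φ,
    fun _ _ => D.j₁_eq_j₂_iff.1, D.j₁_injective, D.j₂_injective, D.exists_eq_j₁_or_j₂,
    fun _ => D.exists_eq_j₁_of_d_r, fun _ => D.exists_eq_j₂_of_d_r⟩

/-- gluing of Lie groupoids, after Gualtieri–Li: groupoids `𝒢₁ ⇉ M₁`,
`𝒢₂ ⇉ M₂` with isomorphic reductions over open sets `U₁ ≅ U₂` can be glued to a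
groupoid over `M = M₁ ∪_φ M₂`, provided the saturation condition holds and `M` is a
Hausdorff manifold; the reductions of the glued groupoid to `M₁`, `M₂` recover `𝒢₁`,
`𝒢₂`. -/
theorem glue_groupoids (G₁ G₂ : Gpd)
    [TopologicalSpace G₁.Ob] [TopologicalSpace G₂.Ob]
    (U₁ : Set G₁.Ob) (U₂ : Set G₂.Ob) (hU₁ : IsOpen U₁) (hU₂ : IsOpen U₂)
    (φb : G₁.Ob → G₂.Ob) (φ : G₁.Arr → G₂.Arr)
    -- `φ` is an isomorphism of the reductions covering the homeomorphism `φb : U₁ → U₂`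
    (hφb : Set.BijOn φb U₁ U₂) (hφbc : ContinuousOn φb U₁)
    (hφ : Set.BijOn φ (G₁.redArr U₁) (G₂.redArr U₂))
    (hφd : ∀ g ∈ G₁.redArr U₁, G₂.d (φ g) = φb (G₁.d g))
    (hφr : ∀ g ∈ G₁.redArr U₁, G₂.r (φ g) = φb (G₁.r g))
    (hφmul : ∀ g h, g ∈ G₁.redArr U₁ → h ∈ G₁.redArr U₁ → G₁.d g = G₁.r h →
      φ (G₁.mul g h) = G₂.mul (φ g) (φ h))
    -- the saturation condition
    (hdisj : φb '' (U₁ ∩ G₁.orbit U₁ᶜ) ∩ (U₂ ∩ G₂.orbit U₂ᶜ) = ∅)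
    -- `M := M₁ ∪_φ M₂` is a Hausdorff manifold
    (hT2 : T2Space (glueOb U₁ φb)) :
    ∃ H : Gpd, ∃ eOb : H.Ob ≃ glueOb U₁ φb,
      ∃ (j₁ : G₁.Arr → H.Arr) (j₂ : G₂.Arr → H.Arr),
      -- `j₁`, `j₂` are groupoid morphisms covering the canonical maps `M₁, M₂ → M`
      (∀ g, eOb (H.d (j₁ g)) = Quot.mk _ (Sum.inl (G₁.d g))) ∧
      (∀ g, eOb (H.r (j₁ g)) = Quot.mk _ (Sum.inl (G₁.r g))) ∧
      (∀ g, eOb (H.d (j₂ g)) = Quot.mk _ (Sum.inr (G₂.d g))) ∧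
      (∀ g, eOb (H.r (j₂ g)) = Quot.mk _ (Sum.inr (G₂.r g))) ∧
      (∀ g h, G₁.d g = G₁.r h → j₁ (G₁.mul g h) = H.mul (j₁ g) (j₁ h)) ∧
      (∀ g h, G₂.d g = G₂.r h → j₂ (G₂.mul g h) = H.mul (j₂ g) (j₂ h)) ∧
      (∀ x, H.u (eOb.symm (Quot.mk _ (Sum.inl x))) = j₁ (G₁.u x)) ∧
      (∀ x, H.u (eOb.symm (Quot.mk _ (Sum.inr x))) = j₂ (G₂.u x)) ∧
      -- the two images are glued exactly along `φ`
      (∀ g ∈ G₁.redArr U₁, j₂ (φ g) = j₁ g) ∧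
      (∀ g₁ g₂, j₁ g₁ = j₂ g₂ → g₁ ∈ G₁.redArr U₁ ∧ g₂ = φ g₁) ∧
      Function.Injective j₁ ∧ Function.Injective j₂ ∧
      (∀ a : H.Arr, (∃ g, a = j₁ g) ∨ (∃ g, a = j₂ g)) ∧
      -- the reductions of `H` to `M₁` and to `M₂` are `𝒢₁` and `𝒢₂`
      (∀ a : H.Arr, (∃ x, eOb (H.d a) = Quot.mk _ (Sum.inl x)) →
        (∃ y, eOb (H.r a) = Quot.mk _ (Sum.inl y)) → ∃ g, a = j₁ g) ∧
      (∀ a : H.Arr, (∃ x, eOb (H.d a) = Quot.mk _ (Sum.inr x)) →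
        (∃ y, eOb (H.r a) = Quot.mk _ (Sum.inr y)) → ∃ g, a = j₂ g) :=
  glue_groupoids_general G₁ G₂ U₁ U₂ φb φ hφb hφ hφd hφr hφmul hdisj
end

section
/- In the gluing situation of Gualtieri–Li: with 𝒢₁ ⇉ M₁, 𝒢₂ ⇉ M₂, open sets U₁ ⊂ M₁, U₂ ⊂ M₂ identified by an isomorphism φ of the reductions, and assuming φ(U₁ ∩ 𝒢₁(M₁∖U₁)𝒢₁) ∩ (U₂ ∩ 𝒢₂(M₂∖U₂)𝒢₂) = ∅, the following composability dichotomy holds: if g₁ ∈ 𝒢₁ and g₂ ∈ 𝒢₂ (after identifying along φ) satisfy d(g₁) = r(g₂), then d(g₁) ∈ U₁ = U₂ and moreover r(g₁) ∈ U₁ or d(g₂) ∈ U₂. -/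
def glueR {Ob₁ Ob₂ : Type} (U₁ : Set Ob₁) (φb : Ob₁ → Ob₂) :
    (Ob₁ ⊕ Ob₂) → (Ob₁ ⊕ Ob₂) → Prop
  | Sum.inl a, Sum.inl b => a = b
  | Sum.inl a, Sum.inr b => a ∈ U₁ ∧ b = φb a
  | Sum.inr a, Sum.inl b => b ∈ U₁ ∧ a = φb b
  | Sum.inr a, Sum.inr b => a = b

lemma glueR_of_eqvGen {Ob₁ Ob₂ : Type} {U₁ : Set Ob₁} {φb : Ob₁ → Ob₂}
    (hinj : Set.InjOn φb U₁) {a b} (h : Relation.EqvGen (glueRel U₁ φb) a b) :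
    glueR U₁ φb a b := by
  induction h with
  | rel a b h =>
    rcases h with ⟨x, hx, ⟨ha, hb⟩ | ⟨ha, hb⟩⟩ <;> subst ha <;> subst hb <;>
      simp [glueR, hx]
  | refl a => cases a <;> simp [glueR]
  | symm a b _ ih => cases a <;> cases b <;> simp_all [glueR] <;> tauto
  | trans a b c _ _ ih1 ih2 =>
    rcases a with a|a <;> rcases b with b|b <;> rcases c with c|c <;>
      simp only [glueR] at ih1 ih2 ⊢
    · exact ih1.trans ih2
    · obtain ⟨h1, h2⟩ := ih2; subst ih1; exact ⟨h1, h2⟩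
    · exact hinj ih1.1 ih2.1 (ih1.2.symm.trans ih2.2)
    · obtain ⟨h1, h2⟩ := ih1; subst ih2; exact ⟨h1, h2⟩
    · obtain ⟨h1, h2⟩ := ih1; subst ih2; exact ⟨h1, h2⟩
    · exact ih1.2.trans ih2.2.symm
    · obtain ⟨h1, h2⟩ := ih2; subst ih1; exact ⟨h1, h2⟩
    · exact ih1.trans ih2

/-- composability dichotomy in the Gualtieri–Li gluing situation.  If the
saturations condition `φ(U₁ ∩ 𝒢₁(M₁∖U₁)𝒢₁) ∩ (U₂ ∩ 𝒢₂(M₂∖U₂)𝒢₂) = ∅` holds and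
`g₁ ∈ 𝒢₁`, `g₂ ∈ 𝒢₂` satisfy `d(g₁) = r(g₂)` in the glued space `M₁ ∪_φ M₂`, then
`d(g₁) ∈ U₁ = U₂` and moreover `r(g₁) ∈ U₁` or `d(g₂) ∈ U₂`. -/
theorem glue_composability_dichotomy (G₁ G₂ : Gpd)
    (U₁ : Set G₁.Ob) (U₂ : Set G₂.Ob)
    (φb : G₁.Ob → G₂.Ob) (φ : G₁.Arr → G₂.Arr)
    -- `φ` is an isomorphism of the reductions covering the diffeomorphism `φb : U₁ → U₂`
    (hφb : Set.BijOn φb U₁ U₂)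
    (hφ : Set.BijOn φ (G₁.redArr U₁) (G₂.redArr U₂))
    (hφd : ∀ g ∈ G₁.redArr U₁, G₂.d (φ g) = φb (G₁.d g))
    (hφr : ∀ g ∈ G₁.redArr U₁, G₂.r (φ g) = φb (G₁.r g))
    (hφmul : ∀ g h, g ∈ G₁.redArr U₁ → h ∈ G₁.redArr U₁ → G₁.d g = G₁.r h →
      φ (G₁.mul g h) = G₂.mul (φ g) (φ h))
    -- the saturation condition
    (hdisj : φb '' (U₁ ∩ G₁.orbit U₁ᶜ) ∩ (U₂ ∩ G₂.orbit U₂ᶜ) = ∅)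
    -- arrows with `d(g₁) = r(g₂)` in the glued space
    (g₁ : G₁.Arr) (g₂ : G₂.Arr)
    (hc : (Quot.mk (glueRel U₁ φb) (Sum.inl (G₁.d g₁)) : glueOb U₁ φb)
        = Quot.mk (glueRel U₁ φb) (Sum.inr (G₂.r g₂))) :
    G₁.d g₁ ∈ U₁ ∧ (G₁.r g₁ ∈ U₁ ∨ G₂.d g₂ ∈ U₂) := by
  have hR := glueR_of_eqvGen hφb.injOn (Quot.eqvGen_exact hc)
  obtain ⟨hx, hy⟩ : G₁.d g₁ ∈ U₁ ∧ G₂.r g₂ = φb (G₁.d g₁) := hR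
  refine ⟨hx, ?_⟩
  by_contra hcon
  push_neg at hcon
  obtain ⟨h1, h2⟩ := hcon
  have : φb (G₁.d g₁) ∈ φb '' (U₁ ∩ G₁.orbit U₁ᶜ) ∩ (U₂ ∩ G₂.orbit U₂ᶜ) := by
    constructor
    · exact ⟨G₁.d g₁, ⟨hx, ⟨G₁.inv g₁, by simp [G₁.d_inv, G₁.r_inv, h1]⟩⟩, rfl⟩
    · exact ⟨hy ▸ hφb.mapsTo hx, hy ▸ ⟨g₂, h2, rfl⟩⟩
  rw [hdisj] at this
  exact this
end

section
/- Let 𝒢 ⇉ M be a Lie groupoid, L ⊂ M an A(𝒢)-tame submanifold with tubular neighborhood π : U → L whose fibers are simply connected, and suppose there is an injective Lie groupoid morphism Φ : U ×_π U → 𝒢|_U from the fibered pair groupoid over the units (i.e., d∘Φ = d and r∘Φ = r). Define g : U → 𝒢 by g(u) := Φ(π(u), u). Then the map Ψ(γ) := (r(γ), g(r(γ))·γ·g(d(γ))⁻¹, d(γ)) is a Lie groupoid isomorphism from the reduction 𝒢|_U := d⁻¹(U) ∩ r⁻¹(U) to the fibered pull-back groupoid π^#(𝒢|_L) = U ×_π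 𝒢|_L ×_π U, which is the identity on the units U. -/
/-- local structure near a tame submanifold: let `𝒢 ⇉ M` be a groupoid,
`L ⊆ M` an `A(𝒢)`-tame submanifold with tubular neighborhood `π : U → L` whose fibers
are simply connected, and `Φ` an injective groupoid morphism from the fibered pair
groupoid `U ×_π U` into `𝒢` preserving units (`d(Φ(u₁,u₂)) = u₂`, `r(Φ(u₁,u₂)) = u₁`).
With `g(u) := Φ(π(u), u)`, the map `Ψ(γ) = (r γ, g(r γ)·γ·g(d γ)⁻¹, d γ)` is an
isomorphism from the reduction `𝒢|_U` to the fibered pull-back groupoid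
`π^#(𝒢|_L) = U ×_π 𝒢|_L ×_π U`, which is the identity on units. -/
theorem reduction_iso_pullback_of_tame (G : Gpd) (U L : Set G.Ob) (π : G.Ob → G.Ob)
    -- `π : U → L` is a tubular neighborhood of `L` in `M`
    (hLU : L ⊆ U) (hπU : ∀ u ∈ U, π u ∈ L) (hπL : ∀ x ∈ L, π x = x)
    -- `Φ : U ×_π U → 𝒢` is an injective groupoid morphism preserving units
    (Φ : G.Ob → G.Ob → G.Arr)
    (hΦd : ∀ u₁ u₂, u₁ ∈ U → u₂ ∈ U → π u₁ = π u₂ → G.d (Φ u₁ u₂) = u₂)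
    (hΦr : ∀ u₁ u₂, u₁ ∈ U → u₂ ∈ U → π u₁ = π u₂ → G.r (Φ u₁ u₂) = u₁)
    (hΦmul : ∀ u₁ u₂ u₃, u₁ ∈ U → u₂ ∈ U → u₃ ∈ U → π u₁ = π u₂ → π u₂ = π u₃ →
      G.mul (Φ u₁ u₂) (Φ u₂ u₃) = Φ u₁ u₃)
    (hΦinj : ∀ u₁ u₂ v₁ v₂, u₁ ∈ U → u₂ ∈ U → v₁ ∈ U → v₂ ∈ U → π u₁ = π u₂ →
      π v₁ = π v₂ → Φ u₁ u₂ = Φ v₁ v₂ → u₁ = v₁ ∧ u₂ = v₂) :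
    -- with `g u := Φ (π u) u` and
    -- `Ψ γ := (r γ, g (r γ) · γ · g (d γ)⁻¹, d γ)` :
    ∀ (g : G.Ob → G.Arr), (∀ u, g u = Φ (π u) u) →
    ∀ (Ψ : G.Arr → G.Ob × G.Arr × G.Ob),
      (∀ γ, Ψ γ = (G.r γ, G.mul (G.mul (g (G.r γ)) γ) (G.inv (g (G.d γ))), G.d γ)) →
      -- `Ψ` maps `𝒢|_U` bijectively onto `U ×_π 𝒢|_L ×_π U` …
      Set.BijOn Ψ (G.redArr U)
        {t : G.Ob × G.Arr × G.Ob | t.1 ∈ U ∧ t.2.2 ∈ U ∧ t.2.1 ∈ G.redArr L ∧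
          G.r t.2.1 = π t.1 ∧ G.d t.2.1 = π t.2.2} ∧
      -- … is a groupoid morphism: it intertwines the products …
      (∀ γ δ, γ ∈ G.redArr U → δ ∈ G.redArr U → G.d γ = G.r δ →
        Ψ (G.mul γ δ) = ((Ψ γ).1, G.mul (Ψ γ).2.1 (Ψ δ).2.1, (Ψ δ).2.2)) ∧
      -- … and is the identity on the units `U`
      (∀ x ∈ U, Ψ (G.u x) = (x, G.u (π x), x)) := by
  intro g hg Ψ hΨ
  have hπmem : ∀ u ∈ U, π u ∈ U := fun u hu => hLU (hπU u hu)
  have hππ : ∀ u ∈ U, π (π u) = π u := fun u hu => hπL _ (hπU u hu)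
  have hdg : ∀ u ∈ U, G.d (g u) = u := fun u hu => by
    rw [hg]; exact hΦd _ _ (hπmem u hu) hu (hππ u hu)
  have hrg : ∀ u ∈ U, G.r (g u) = π u := fun u hu => by
    rw [hg]; exact hΦr _ _ (hπmem u hu) hu (hππ u hu)
  -- the middle arrow of Ψ γ
  set mid : G.Arr → G.Arr :=
    fun γ => G.mul (G.mul (g (G.r γ)) γ) (G.inv (g (G.d γ))) with hmid
  -- basic d/r computations for mid
  have hdmul1 : ∀ γ, G.r γ ∈ U → G.d (G.mul (g (G.r γ)) γ) = G.d γ :=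
    fun γ h => G.d_mul _ _ (hdg _ h)
  have hrmul1 : ∀ γ, G.r γ ∈ U → G.r (G.mul (g (G.r γ)) γ) = π (G.r γ) := by
    intro γ h
    rw [G.r_mul _ _ (hdg _ h), hrg _ h]
  have hdmid : ∀ γ, G.d γ ∈ U → G.r γ ∈ U → G.d (mid γ) = π (G.d γ) := by
    intro γ hd hr
    have h1 : G.d (G.mul (g (G.r γ)) γ) = G.r (G.inv (g (G.d γ))) := by
      rw [hdmul1 γ hr, G.r_inv, hdg _ hd]
    rw [hmid, G.d_mul _ _ h1, G.d_inv, hrg _ hd]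
  have hrmid : ∀ γ, G.d γ ∈ U → G.r γ ∈ U → G.r (mid γ) = π (G.r γ) := by
    intro γ hd hr
    have h1 : G.d (G.mul (g (G.r γ)) γ) = G.r (G.inv (g (G.d γ))) := by
      rw [hdmul1 γ hr, G.r_inv, hdg _ hd]
    rw [hmid, G.r_mul _ _ h1, hrmul1 γ hr]
  -- the inverse map: recover γ from (x, h, y)
  have hrecover : ∀ γ, G.d γ ∈ U → G.r γ ∈ U →
      G.mul (G.inv (g (G.r γ))) (G.mul (mid γ) (g (G.d γ))) = γ := by
    intro γ hd hr
    have h1 : G.d (G.mul (g (G.r γ)) γ) = G.r (G.inv (g (G.d γ))) := by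
      rw [hdmul1 γ hr, G.r_inv, hdg _ hd]
    have step1 : G.mul (mid γ) (g (G.d γ)) = G.mul (g (G.r γ)) γ := by
      rw [hmid, G.mul_assoc _ _ _ h1 (by rw [G.d_inv]), G.inv_mul,
        hdg _ hd, ← hdmul1 γ hr, G.mul_unit]
    rw [step1, ← G.mul_assoc _ _ _ (by rw [G.d_inv]) (hdg _ hr), G.inv_mul,
      hdg _ hr, G.unit_mul]
  refine ⟨⟨?_, ?_, ?_⟩, ?_, ?_⟩
  · -- MapsTo
    intro γ hγ
    obtain ⟨hd, hr⟩ := hγ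
    rw [hΨ]
    refine ⟨hr, hd, ⟨?_, ?_⟩, ?_, ?_⟩
    · show G.d (mid γ) ∈ L
      rw [hdmid γ hd hr]; exact hπU _ hd
    · show G.r (mid γ) ∈ L
      rw [hrmid γ hd hr]; exact hπU _ hr
    · exact hrmid γ hd hr
    · exact hdmid γ hd hr
  · -- InjOn
    intro γ hγ δ hδ hΨeq
    rw [hΨ, hΨ] at hΨeq
    have hr : G.r γ = G.r δ := congrArg Prod.fst hΨeq
    have hd : G.d γ = G.d δ := congrArg (fun t => t.2.2) hΨeq
    have hm : mid γ = mid δ := congrArg (fun t => t.2.1) hΨeq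
    calc γ = G.mul (G.inv (g (G.r γ))) (G.mul (mid γ) (g (G.d γ))) :=
          (hrecover γ hγ.1 hγ.2).symm
      _ = G.mul (G.inv (g (G.r δ))) (G.mul (mid δ) (g (G.d δ))) := by
          rw [hr, hd, hm]
      _ = δ := hrecover δ hδ.1 hδ.2
  · -- SurjOn
    rintro ⟨x, h, y⟩ ⟨hx, hy, ⟨hdhL, hrhL⟩, hrh, hdh⟩
    simp only at hx hy hrh hdh
    set γ := G.mul (G.inv (g x)) (G.mul h (g y)) with hγdef
    have hc1 : G.d h = G.r (g y) := by rw [hrg _ hy, hdh]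
    have hdhy : G.d (G.mul h (g y)) = y := by rw [G.d_mul _ _ hc1, hdg _ hy]
    have hrhy : G.r (G.mul h (g y)) = π x := by rw [G.r_mul _ _ hc1, hrh]
    have hc2 : G.d (G.inv (g x)) = G.r (G.mul h (g y)) := by
      rw [G.d_inv, hrg _ hx, hrhy]
    have hdγ : G.d γ = y := by rw [hγdef, G.d_mul _ _ hc2, hdhy]
    have hrγ : G.r γ = x := by rw [hγdef, G.r_mul _ _ hc2, G.r_inv, hdg _ hx]
    have hmem : γ ∈ G.redArr U := ⟨by rw [hdγ]; exact hy, by rw [hrγ]; exact hx⟩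
    refine ⟨γ, hmem, ?_⟩
    rw [hΨ, hdγ, hrγ]
    have step1 : G.mul (g x) γ = G.mul h (g y) := by
      rw [hγdef, ← G.mul_assoc _ _ _ (by rw [G.r_inv]) hc2, G.mul_inv,
        hrg _ hx, ← hrhy, G.unit_mul]
    have hmidγ : G.mul (G.mul (g x) γ) (G.inv (g y)) = h := by
      rw [step1, G.mul_assoc _ _ _ hc1 (by rw [G.r_inv]), G.mul_inv,
        hrg _ hy, ← hdh, G.mul_unit]
    rw [hmidγ]
  · -- morphism
    intro γ δ hγ hδ hdr
    have hdm : G.d (G.mul γ δ) = G.d δ := G.d_mul _ _ hdr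
    have hrm : G.r (G.mul γ δ) = G.r γ := G.r_mul _ _ hdr
    rw [hΨ, hΨ, hΨ, hdm, hrm]
    have key : G.mul (G.mul (g (G.r γ)) (G.mul γ δ)) (G.inv (g (G.d δ))) =
        G.mul (G.mul (G.mul (g (G.r γ)) γ) (G.inv (g (G.d γ))))
          (G.mul (G.mul (g (G.r δ)) δ) (G.inv (g (G.d δ)))) := by
      rw [← hdr]
      set a := g (G.r γ) with ha
      set b := g (G.d γ) with hb
      set c := g (G.d δ) with hc
      have da : G.d a = G.r γ := hdg _ hγ.2
      have db : G.d b = G.d γ := hdg _ hγ.1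
      have dc : G.d c = G.d δ := hdg _ hδ.1
      have haγ : G.d (G.mul a γ) = G.d γ := G.d_mul _ _ da
      have hbδ2 : G.d (G.mul b δ) = G.d δ := G.d_mul _ _ (by rw [db, hdr])
      have hrbδ : G.r (G.mul b δ) = G.r b := G.r_mul _ _ (by rw [db, hdr])
      have hKr : G.r (G.mul (G.mul b δ) (G.inv c)) = G.r b := by
        rw [G.r_mul _ _ (by rw [hbδ2, G.r_inv, dc]), hrbδ]
      have step1 : G.mul (G.mul (G.mul a γ) (G.inv b)) (G.mul (G.mul b δ) (G.inv c))
          = G.mul (G.mul a γ) (G.mul (G.inv b) (G.mul (G.mul b δ) (G.inv c))) :=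
        G.mul_assoc _ _ _ (by rw [haγ, G.r_inv, db]) (by rw [G.d_inv, hKr])
      have step2 : G.mul (G.inv b) (G.mul (G.mul b δ) (G.inv c))
          = G.mul δ (G.inv c) := by
        rw [← G.mul_assoc _ _ _ (by rw [G.d_inv, hrbδ]) (by rw [hbδ2, G.r_inv, dc]),
          ← G.mul_assoc _ _ _ (by rw [G.d_inv]) (by rw [db, hdr]),
          G.inv_mul, db, hdr, G.unit_mul]
      have step3 : G.mul (G.mul a γ) (G.mul δ (G.inv c))
          = G.mul (G.mul (G.mul a γ) δ) (G.inv c) :=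
        (G.mul_assoc _ _ _ (by rw [haγ, hdr]) (by rw [G.r_inv, dc])).symm
      have step4 : G.mul (G.mul a γ) δ = G.mul a (G.mul γ δ) :=
        G.mul_assoc _ _ _ da hdr
      rw [step1, step2, step3, step4]
    rw [key]
  · -- units
    intro x hx
    rw [hΨ, G.r_u, G.d_u]
    have h1 : G.mul (g x) (G.u x) = g x := by
      have := G.mul_unit (g x)
      rwa [hdg x hx] at this
    rw [h1, G.mul_inv, hrg _ hx]
end
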